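/- arXiv:2501.11231 — 2 statements merged into one kernel-verified Lean document; each statement's English description precedes it below -/
import Mathlib

section
/- The entropy-regularized optimal transport problem max over P of ⟨M,P⟩ + τH(P), subject to P having nonnegative entries, row sums 1/N, and column sums q_j, has a unique maximizer, and this maximizer has the form P = diag(u) · A · diag(v) where A = exp(M/τ) entrywise and u, v are positive vectors. -/
open Real Finset


lemma nml_le_one {x : ℝ} (h0 : 0 ≤ x) (h1 : x ≤ 1) : Real.negMulLog x ≤ 1 := by
  rcases eq_or_lt_of_le h0 with h | h
  · simp [← h]
  · have hinv : Real.log x⁻¹ ≤ x⁻¹ - 1 := Real.log_le_sub_one_of_pos (by positivity)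
    rw [Real.log_inv] at hinv
    have : Real.negMulLog x = x * (-Real.log x) := by unfold Real.negMulLog; ring
    rw [this]
    have hx : x * (-Real.log x) ≤ x * (x⁻¹ - 1) :=
      mul_le_mul_of_nonneg_left hinv h0
    have : x * (x⁻¹ - 1) = 1 - x := by field_simp
    nlinarith
lemma nml_cc {x y t : ℝ} (hx : 0 ≤ x) (hy : 0 ≤ y) (ht0 : 0 ≤ t) (ht1 : t ≤ 1) :
    (1 - t) * Real.negMulLog x + t * Real.negMulLog y ≤
      Real.negMulLog ((1 - t) * x + t * y) := by
  have := Real.concaveOn_negMulLog.2 (Set.mem_Ici.2 hx) (Set.mem_Ici.2 hy)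
    (by linarith : (0:ℝ) ≤ 1 - t) ht0 (by ring)
  simpa [smul_eq_mul] using this

lemma nml_mid_strict {x y : ℝ} (hx : 0 ≤ x) (hy : 0 ≤ y) (hxy : x ≠ y) :
    (Real.negMulLog x + Real.negMulLog y) / 2 < Real.negMulLog ((x + y) / 2) := by
  have := Real.strictConcaveOn_negMulLog.2 (Set.mem_Ici.2 hx) (Set.mem_Ici.2 hy) hxy
    (by norm_num : (0:ℝ) < 1/2) (by norm_num : (0:ℝ) < 1/2) (by norm_num)
  have e1 : (1/2 : ℝ) • x + (1/2 : ℝ) • y = (x + y) / 2 := by simp [smul_eq_mul]; ring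
  have e2 : (1/2 : ℝ) • Real.negMulLog x + (1/2 : ℝ) • Real.negMulLog y
      = (Real.negMulLog x + Real.negMulLog y) / 2 := by simp [smul_eq_mul]; ring
  rw [e1, e2] at this
  exact this

noncomputable def Fobj {N K : ℕ} (M : Matrix (Fin N) (Fin K) ℝ) (τ : ℝ)
    (P : Matrix (Fin N) (Fin K) ℝ) : ℝ :=
  (∑ i, ∑ j, M i j * P i j) + τ * ∑ i, ∑ j, Real.negMulLog (P i j)

lemma nml_scaled_lower {t c A τ : ℝ} (ht0 : 0 < t) (hc : 0 < c) (hτ : 0 < τ)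
    (hlog : Real.log t ≤ -(A / (τ * c))) :
    t * (A / τ - c * |Real.log c|) ≤ Real.negMulLog (t * c) := by
  have h1 : Real.negMulLog (t * c) = t * (c * (-Real.log t) + c * (-Real.log c)) := by
    unfold Real.negMulLog
    rw [Real.log_mul (ne_of_gt ht0) (ne_of_gt hc)]; ring
  rw [h1]
  apply mul_le_mul_of_nonneg_left _ ht0.le
  have e1 : c * (A / (τ * c)) ≤ c * (-Real.log t) :=
    mul_le_mul_of_nonneg_left (by linarith) hc.le
  have e2 : c * (A / (τ * c)) = A / τ := by field_simp
  have e3 : -(c * |Real.log c|) ≤ c * (-Real.log c) := by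
    have h := mul_le_mul_of_nonneg_left (le_abs_self (Real.log c)) hc.le
    linarith
  rw [e2] at e1
  linarith

lemma sum_ite_pair {N K : ℕ} (i0 : Fin N) (j0 : Fin K) (c : ℝ) :
    ∑ x : Fin N, ∑ y : Fin K, (if x = i0 then (if y = j0 then c else 0) else 0) = c := by
  have h : ∀ x : Fin N, ∑ y : Fin K, (if x = i0 then (if y = j0 then c else 0) else 0)
      = (if x = i0 then c else 0) := by
    intro x; by_cases hx : x = i0 <;> simp [hx]
  simp [h]

lemma maximizer_pos
    {N K : ℕ} (hN : 0 < N) (hK : 0 < K)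
    (M : Matrix (Fin N) (Fin K) ℝ) {τ : ℝ} (hτ : 0 < τ)
    (q : Fin K → ℝ) (hq : ∀ j, 0 < q j) (hq1 : ∑ j, q j = 1)
    (P : Matrix (Fin N) (Fin K) ℝ)
    (hP0 : ∀ i j, 0 ≤ P i j) (hPr : ∀ i, ∑ j, P i j = 1 / N)
    (hPc : ∀ j, ∑ i, P i j = q j)
    (hmax : ∀ P' : Matrix (Fin N) (Fin K) ℝ, (∀ i j, 0 ≤ P' i j) →
      (∀ i, ∑ j, P' i j = 1 / N) → (∀ j, ∑ i, P' i j = q j) →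
      Fobj M τ P' ≤ Fobj M τ P) :
    ∀ i j, 0 < P i j := by
  have hNR : (0:ℝ) < N := by exact_mod_cast hN
  -- entries of P are in [0,1]
  have hq_le1 : ∀ j, q j ≤ 1 := by
    intro j
    rw [← hq1]
    exact Finset.single_le_sum (fun k _ => (hq k).le) (mem_univ j)
  have hP_le1 : ∀ i j, P i j ≤ 1 := by
    intro i j
    have : P i j ≤ ∑ i', P i' j :=
      Finset.single_le_sum (fun k _ => hP0 k j) (mem_univ i)
    rw [hPc j] at this
    exact this.trans (hq_le1 j)
  intro i0 j0
  by_contra hcon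
  push_neg at hcon
  have hz : P i0 j0 = 0 := le_antisymm hcon (hP0 i0 j0)
  -- interior point Q
  set Q : Matrix (Fin N) (Fin K) ℝ := fun _ j => q j / N with hQdef
  have hQ0 : ∀ i j, 0 < Q i j := fun i j => by simp only [hQdef]; exact div_pos (hq j) hNR
  have hQ_le1 : ∀ i j, Q i j ≤ 1 := by
    intro i j
    have : q j / N ≤ 1 / 1 := by
      apply div_le_div₀ (by norm_num) (hq_le1 j) one_pos
      exact_mod_cast hN
    simpa [hQdef] using this.trans (by norm_num)
  set qq : ℝ := q j0 / N with hqq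
  have hqq0 : 0 < qq := div_pos (hq j0) hNR
  set CM : ℝ := ∑ i, ∑ j, |M i j| with hCM
  have hCM0 : 0 ≤ CM := Finset.sum_nonneg fun i _ => Finset.sum_nonneg fun j _ => abs_nonneg _
  set A : ℝ := CM + τ * (N * K) + τ * (qq * |Real.log qq|) + 1 with hA
  have hA0 : 0 < A := by
    have h1 : (0:ℝ) ≤ τ * (N * K) := by positivity
    have h2 : (0:ℝ) ≤ τ * (qq * |Real.log qq|) :=
      mul_nonneg hτ.le (mul_nonneg hqq0.le (abs_nonneg _))
    rw [hA]; linarith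
  set t : ℝ := min (1/2) (Real.exp (-(A / (τ * qq)))) with htdef
  have ht0 : 0 < t := lt_min (by norm_num) (Real.exp_pos _)
  have ht1 : t ≤ 1 := (min_le_left _ _).trans (by norm_num)
  have htlog : Real.log t ≤ -(A / (τ * qq)) := by
    calc Real.log t ≤ Real.log (Real.exp (-(A / (τ * qq)))) :=
          Real.log_le_log ht0 (min_le_right _ _)
      _ = -(A / (τ * qq)) := Real.log_exp _
  -- perturbed matrix
  set R : Matrix (Fin N) (Fin K) ℝ := fun a b => (1 - t) * P a b + t * Q a b with hRdef
  clear_value Q qq CM A t R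
  have hR0 : ∀ a b, 0 ≤ R a b := fun a b => by
    have := hP0 a b; have := (hQ0 a b).le; have h1t : (0:ℝ) ≤ 1 - t := by linarith
    simp only [hRdef]; positivity
  have hRr : ∀ a, ∑ b, R a b = 1 / N := by
    intro a
    simp only [hRdef, hQdef]
    rw [Finset.sum_add_distrib, ← Finset.mul_sum, ← Finset.mul_sum, hPr a,
      ← Finset.sum_div, hq1]
    ring
  have hRc : ∀ b, ∑ a, R a b = q b := by
    intro b
    simp only [hRdef, hQdef]
    rw [Finset.sum_add_distrib, ← Finset.mul_sum, ← Finset.mul_sum, hPc b,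
      Finset.sum_const, card_univ, Fintype.card_fin]
    field_simp
    rw [nsmul_eq_mul, show (N:ℝ) * (q b / N) = q b by rw [mul_div_assoc', mul_comm, mul_div_assoc, div_self hNR.ne', mul_one]]; ring
  have hle : Fobj M τ R ≤ Fobj M τ P := hmax R hR0 hRr hRc
  -- linear part bound
  have hlin : ∑ i, ∑ j, M i j * R i j ≥ ∑ i, ∑ j, M i j * P i j - t * CM := by
    have : ∀ a b, M a b * R a b ≥ M a b * P a b - t * |M a b| := by
      intro a b
      have hdiff : M a b * R a b - M a b * P a b = t * (M a b * (Q a b - P a b)) := by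
        simp only [hRdef]; ring
      have habs : |M a b * (Q a b - P a b)| ≤ |M a b| := by
        rw [abs_mul]
        apply mul_le_of_le_one_right (abs_nonneg _)
        rw [abs_le]
        constructor
        · have := hP_le1 a b; have := (hQ0 a b).le; linarith
        · have := hQ_le1 a b; have := hP0 a b; linarith
      nlinarith [neg_abs_le (M a b * (Q a b - P a b)), ht0.le,
        mul_le_mul_of_nonneg_left habs ht0.le]
    calc ∑ i, ∑ j, M i j * R i j ≥ ∑ i, ∑ j, (M i j * P i j - t * |M i j|) :=
          Finset.sum_le_sum fun i _ => Finset.sum_le_sum fun j _ => this i j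
      _ = ∑ i, ∑ j, M i j * P i j - t * CM := by
          rw [hCM]
          simp only [Finset.sum_sub_distrib, ← Finset.mul_sum]
  -- entropy part bound
  have hent : ∑ i, ∑ j, Real.negMulLog (R i j) ≥
      ∑ i, ∑ j, Real.negMulLog (P i j) + (Real.negMulLog (t * qq) - t * (N * K)) := by
    have hpt : ∀ a b, Real.negMulLog (R a b) ≥ Real.negMulLog (P a b) +
        ((if a = i0 then (if b = j0 then Real.negMulLog (t * qq) + t else 0) else 0) - t) := by
      intro a b
      by_cases ha : a = i0
      · by_cases hb : b = j0
        · rw [ha, hb]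
          have hR : R i0 j0 = t * qq := by simp [hRdef, hz, hQdef, hqq]
          rw [hR, hz]
          simp
        · have hcc := nml_cc (hP0 a b) (hQ0 a b).le ht0.le ht1
          have hn1 : Real.negMulLog (P a b) ≤ 1 := nml_le_one (hP0 a b) (hP_le1 a b)
          have hn0 : 0 ≤ Real.negMulLog (Q a b) :=
            Real.negMulLog_nonneg (hQ0 a b).le (hQ_le1 a b)
          rw [if_pos ha, if_neg hb]
          simp only [hRdef] at hcc ⊢
          nlinarith [mul_le_mul_of_nonneg_left hn1 ht0.le]
      · have hcc := nml_cc (hP0 a b) (hQ0 a b).le ht0.le ht1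
        have hn1 : Real.negMulLog (P a b) ≤ 1 := nml_le_one (hP0 a b) (hP_le1 a b)
        have hn0 : 0 ≤ Real.negMulLog (Q a b) :=
          Real.negMulLog_nonneg (hQ0 a b).le (hQ_le1 a b)
        rw [if_neg ha]
        simp only [hRdef] at hcc ⊢
        nlinarith [mul_le_mul_of_nonneg_left hn1 ht0.le]
    calc ∑ i, ∑ j, Real.negMulLog (R i j)
        ≥ ∑ i, ∑ j, (Real.negMulLog (P i j) +
          ((if i = i0 then (if j = j0 then Real.negMulLog (t * qq) + t else 0) else 0) - t)) :=
          Finset.sum_le_sum fun i _ => Finset.sum_le_sum fun j _ => hpt i j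
      _ ≥ ∑ i, ∑ j, Real.negMulLog (P i j) + (Real.negMulLog (t * qq) - t * (N * K)) := by
          simp only [Finset.sum_add_distrib, Finset.sum_sub_distrib, Finset.sum_const,
            card_univ, Fintype.card_fin, nsmul_eq_mul]
          rw [sum_ite_pair]
          linarith [ht0.le]
  -- lower bound on negMulLog (t * qq)
  have hnml_tqq : Real.negMulLog (t * qq) ≥ t * (A / τ - qq * |Real.log qq|) :=
    nml_scaled_lower ht0 hqq0 hτ htlog
  -- combine
  have hcomb : Fobj M τ R - Fobj M τ P ≥ t := by
    have expand : Fobj M τ R - Fobj M τ P =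
        (∑ i, ∑ j, M i j * R i j - ∑ i, ∑ j, M i j * P i j) +
        τ * (∑ i, ∑ j, Real.negMulLog (R i j) - ∑ i, ∑ j, Real.negMulLog (P i j)) := by
      unfold Fobj; ring
    rw [expand]
    have h2 : τ * (∑ i, ∑ j, Real.negMulLog (R i j) - ∑ i, ∑ j, Real.negMulLog (P i j)) ≥
        τ * (Real.negMulLog (t * qq) - t * (N * K)) := by
      apply mul_le_mul_of_nonneg_left _ hτ.le
      linarith [hent]
    have h3 : τ * (Real.negMulLog (t * qq) - t * (N * K)) ≥
        τ * (t * (A / τ - qq * |Real.log qq|) - t * (N * K)) := by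
      apply mul_le_mul_of_nonneg_left _ hτ.le
      linarith [hnml_tqq]
    have h4 : τ * (t * (A / τ - qq * |Real.log qq|) - t * (N * K)) = t * (A - τ * (qq * |Real.log qq|) - τ * (N * K)) := by
      field_simp
    have h5 : A - τ * (qq * |Real.log qq|) - τ * (N * K) = CM + 1 := by rw [hA]; ring
    have h6 : t * (A - τ * (qq * |Real.log qq|) - τ * (N * K)) = t * CM + t := by
      rw [h5]; ring
    linarith [hlin, h2, h3, h4 ▸ h6 ▸ le_refl (t * CM + t)]
  linarith [hle, hcomb, ht0]

section Exist
variable {N K : ℕ} (M : Matrix (Fin N) (Fin K) ℝ) (τ : ℝ) (q : Fin K → ℝ)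

lemma exists_maximizer (hN : 0 < N) (hq : ∀ j, 0 < q j) (hq1 : ∑ j, q j = 1) :
    ∃ P : Matrix (Fin N) (Fin K) ℝ,
      ((∀ i j, 0 ≤ P i j) ∧ (∀ i, ∑ j, P i j = 1 / N) ∧ (∀ j, ∑ i, P i j = q j)) ∧
      ∀ P' : Matrix (Fin N) (Fin K) ℝ,
        ((∀ i j, 0 ≤ P' i j) ∧ (∀ i, ∑ j, P' i j = 1 / N) ∧ (∀ j, ∑ i, P' i j = q j)) →
        Fobj M τ P' ≤ Fobj M τ P := by
  have hNR : (0:ℝ) < N := by exact_mod_cast hN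
  set S : Set (Matrix (Fin N) (Fin K) ℝ) :=
    {P | (∀ i j, 0 ≤ P i j) ∧ (∀ i, ∑ j, P i j = 1 / N) ∧ (∀ j, ∑ i, P i j = q j)} with hS
  have hq_le1 : ∀ j, q j ≤ 1 := by
    intro j
    rw [← hq1]
    exact Finset.single_le_sum (fun k _ => (hq k).le) (mem_univ j)
  have hne : S.Nonempty := by
    refine ⟨fun _ j => q j / N, fun i j => (div_pos (hq j) hNR).le, fun i => ?_, fun j => ?_⟩
    · rw [← Finset.sum_div, hq1]
    · rw [Finset.sum_const, card_univ, Fintype.card_fin, nsmul_eq_mul]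
      field_simp
  have hclosed : IsClosed S := by
    have h1 : IsClosed {P : Matrix (Fin N) (Fin K) ℝ | ∀ i j, 0 ≤ P i j} := by
      have : {P : Matrix (Fin N) (Fin K) ℝ | ∀ i j, 0 ≤ P i j} =
          ⋂ i, ⋂ j, {P : Matrix (Fin N) (Fin K) ℝ | 0 ≤ P i j} := by
        ext P; simp [Set.mem_iInter]
      rw [this]
      exact isClosed_iInter fun i => isClosed_iInter fun j =>
        isClosed_le continuous_const ((continuous_apply j).comp (continuous_apply i))
    have h2 : IsClosed {P : Matrix (Fin N) (Fin K) ℝ | ∀ i, ∑ j, P i j = 1 / N} := by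
      have : {P : Matrix (Fin N) (Fin K) ℝ | ∀ i, ∑ j, P i j = 1 / N} =
          ⋂ i, {P : Matrix (Fin N) (Fin K) ℝ | ∑ j, P i j = 1 / N} := by
        ext P; simp [Set.mem_iInter]
      rw [this]
      exact isClosed_iInter fun i => isClosed_eq
        (continuous_finset_sum _ fun j _ => (continuous_apply j).comp (continuous_apply i))
        continuous_const
    have h3 : IsClosed {P : Matrix (Fin N) (Fin K) ℝ | ∀ j, ∑ i, P i j = q j} := by
      have : {P : Matrix (Fin N) (Fin K) ℝ | ∀ j, ∑ i, P i j = q j} =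
          ⋂ j, {P : Matrix (Fin N) (Fin K) ℝ | ∑ i, P i j = q j} := by
        ext P; simp [Set.mem_iInter]
      rw [this]
      exact isClosed_iInter fun j => isClosed_eq
        (continuous_finset_sum _ fun i _ => (continuous_apply j).comp (continuous_apply i))
        continuous_const
    have : S = {P : Matrix (Fin N) (Fin K) ℝ | ∀ i j, 0 ≤ P i j} ∩
        ({P | ∀ i, ∑ j, P i j = 1 / N} ∩ {P | ∀ j, ∑ i, P i j = q j}) := by
      ext P; simp only [hS, Set.mem_setOf_eq, Set.mem_inter_iff]
    rw [this]
    exact h1.inter (h2.inter h3)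
  have hcompact : IsCompact S := by
    have hT : IsCompact (Set.pi Set.univ fun _ : Fin N =>
        (Set.pi Set.univ fun _ : Fin K => Set.Icc (0:ℝ) 1)) :=
      isCompact_univ_pi fun _ => isCompact_univ_pi fun _ => isCompact_Icc
    apply hT.of_isClosed_subset hclosed
    intro P hP
    simp only [Set.mem_pi, Set.mem_univ, forall_true_left, Set.mem_Icc]
    intro i j
    refine ⟨hP.1 i j, ?_⟩
    have : P i j ≤ ∑ i', P i' j :=
      Finset.single_le_sum (fun k _ => hP.1 k j) (mem_univ i)
    rw [hP.2.2 j] at this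
    exact this.trans (hq_le1 j)
  have hcont : Continuous (Fobj M τ) := by
    unfold Fobj
    fun_prop
  obtain ⟨P, hPS, hmaxon⟩ := hcompact.exists_isMaxOn hne hcont.continuousOn
  exact ⟨P, hPS, fun P' hP' => hmaxon hP'⟩

end Exist

lemma nml_mid' {x y : ℝ} (hx : 0 ≤ x) (hy : 0 ≤ y) :
    (Real.negMulLog x + Real.negMulLog y) / 2 ≤ Real.negMulLog ((x + y) / 2) := by
  have := Real.concaveOn_negMulLog.2 (Set.mem_Ici.2 hx) (Set.mem_Ici.2 hy)
    (by norm_num : (0:ℝ) ≤ 1/2) (by norm_num : (0:ℝ) ≤ 1/2) (by norm_num)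
  have e1 : (1/2 : ℝ) • x + (1/2 : ℝ) • y = (x + y) / 2 := by
    simp only [smul_eq_mul]; ring
  have e2 : (1/2 : ℝ) • Real.negMulLog x + (1/2 : ℝ) • Real.negMulLog y
      = (Real.negMulLog x + Real.negMulLog y) / 2 := by simp only [smul_eq_mul]; ring
  rw [e1, e2] at this
  exact this

lemma nml_mid_strict' {x y : ℝ} (hx : 0 ≤ x) (hy : 0 ≤ y) (hxy : x ≠ y) :
    (Real.negMulLog x + Real.negMulLog y) / 2 < Real.negMulLog ((x + y) / 2) := by
  have := Real.strictConcaveOn_negMulLog.2 (Set.mem_Ici.2 hx) (Set.mem_Ici.2 hy) hxy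
    (by norm_num : (0:ℝ) < 1/2) (by norm_num : (0:ℝ) < 1/2) (by norm_num)
  have e1 : (1/2 : ℝ) • x + (1/2 : ℝ) • y = (x + y) / 2 := by
    simp only [smul_eq_mul]; ring
  have e2 : (1/2 : ℝ) • Real.negMulLog x + (1/2 : ℝ) • Real.negMulLog y
      = (Real.negMulLog x + Real.negMulLog y) / 2 := by simp only [smul_eq_mul]; ring
  rw [e1, e2] at this
  exact this

lemma maximizer_unique' {N K : ℕ} (M : Matrix (Fin N) (Fin K) ℝ) {τ : ℝ} (hτ : 0 < τ)
    (q : Fin K → ℝ)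
    (P P' : Matrix (Fin N) (Fin K) ℝ)
    (hP0 : ∀ i j, 0 ≤ P i j) (hPr : ∀ i, ∑ j, P i j = 1 / N)
    (hPc : ∀ j, ∑ i, P i j = q j)
    (hP0' : ∀ i j, 0 ≤ P' i j) (hPr' : ∀ i, ∑ j, P' i j = 1 / N)
    (hPc' : ∀ j, ∑ i, P' i j = q j)
    (hmax : ∀ R : Matrix (Fin N) (Fin K) ℝ, (∀ i j, 0 ≤ R i j) →
      (∀ i, ∑ j, R i j = 1 / N) → (∀ j, ∑ i, R i j = q j) →
      Fobj M τ R ≤ Fobj M τ P)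
    (hval : Fobj M τ P = Fobj M τ P') :
    P = P' := by
  by_contra hne
  have hex : ∃ i j, P i j ≠ P' i j := by
    by_contra h
    push_neg at h
    exact hne (by funext i j; exact h i j)
  obtain ⟨i0, j0, hij⟩ := hex
  set Q : Matrix (Fin N) (Fin K) ℝ := fun a b => (P a b + P' a b) / 2 with hQ
  have hQ0 : ∀ i j, 0 ≤ Q i j := fun i j => by
    have := hP0 i j; have := hP0' i j
    simp only [hQ]; linarith
  have hQr : ∀ i, ∑ j, Q i j = 1 / N := by
    intro i
    simp only [hQ]
    rw [← Finset.sum_div, Finset.sum_add_distrib, hPr i, hPr' i]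
    ring
  have hQc : ∀ j, ∑ i, Q i j = q j := by
    intro j
    simp only [hQ]
    rw [← Finset.sum_div, Finset.sum_add_distrib, hPc j, hPc' j]
    ring
  have hlin : ∑ i, ∑ j, M i j * Q i j =
      ((∑ i, ∑ j, M i j * P i j) + (∑ i, ∑ j, M i j * P' i j)) / 2 := by
    symm
    rw [← Finset.sum_add_distrib, Finset.sum_div]
    apply Finset.sum_congr rfl
    intro i _
    rw [← Finset.sum_add_distrib, Finset.sum_div]
    apply Finset.sum_congr rfl
    intro j _
    simp only [hQ]
    ring
  have hent : ((∑ i, ∑ j, Real.negMulLog (P i j)) + ∑ i, ∑ j, Real.negMulLog (P' i j)) / 2 <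
      ∑ i, ∑ j, Real.negMulLog (Q i j) := by
    rw [← Finset.sum_add_distrib, Finset.sum_div]
    apply Finset.sum_lt_sum
    · intro i _
      rw [← Finset.sum_add_distrib, Finset.sum_div]
      exact Finset.sum_le_sum fun j _ => nml_mid' (hP0 i j) (hP0' i j)
    · refine ⟨i0, mem_univ i0, ?_⟩
      rw [← Finset.sum_add_distrib, Finset.sum_div]
      apply Finset.sum_lt_sum
      · intro j _
        exact nml_mid' (hP0 i0 j) (hP0' i0 j)
      · exact ⟨j0, mem_univ j0, nml_mid_strict' (hP0 i0 j0) (hP0' i0 j0) hij⟩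
  have hgt : Fobj M τ P < Fobj M τ Q := by
    unfold Fobj
    have h1 : (∑ i, ∑ j, M i j * P i j) + τ * ∑ i, ∑ j, Real.negMulLog (P i j) =
        ((((∑ i, ∑ j, M i j * P i j) + τ * ∑ i, ∑ j, Real.negMulLog (P i j)) +
          ((∑ i, ∑ j, M i j * P' i j) + τ * ∑ i, ∑ j, Real.negMulLog (P' i j))) / 2) := by
      have := hval
      unfold Fobj at this
      linarith
    rw [h1, hlin]
    have h3 := mul_lt_mul_of_pos_left hent hτ
    have h4 : τ * (((∑ i, ∑ j, Real.negMulLog (P i j)) + ∑ i, ∑ j, Real.negMulLog (P' i j)) / 2)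
        = (τ * ∑ i, ∑ j, Real.negMulLog (P i j) + τ * ∑ i, ∑ j, Real.negMulLog (P' i j)) / 2 := by
      ring
    linarith
  exact absurd (hmax Q hQ0 hQr hQc) (not_le.2 hgt)

-- generic 4-point sum identity
lemma sum_mul_d1d2 {N K : ℕ} (i i' : Fin N) (j j' : Fin K) (h : Fin N → Fin K → ℝ) :
    ∑ a : Fin N, ∑ b : Fin K, h a b *
      (((if a = i then (1:ℝ) else 0) - (if a = i' then 1 else 0)) *
       ((if b = j then (1:ℝ) else 0) - (if b = j' then 1 else 0)))
    = h i j - h i j' - h i' j + h i' j' := by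
  have inner : ∀ a : Fin N, ∑ b : Fin K, h a b *
      (((if a = i then (1:ℝ) else 0) - (if a = i' then 1 else 0)) *
       ((if b = j then (1:ℝ) else 0) - (if b = j' then 1 else 0)))
      = ((if a = i then (1:ℝ) else 0) - (if a = i' then 1 else 0)) * (h a j - h a j') := by
    intro a
    have : ∀ b : Fin K, h a b *
        (((if a = i then (1:ℝ) else 0) - (if a = i' then 1 else 0)) *
         ((if b = j then (1:ℝ) else 0) - (if b = j' then 1 else 0)))
        = ((if a = i then (1:ℝ) else 0) - (if a = i' then 1 else 0)) *
          ((if b = j then h a b else 0) - (if b = j' then h a b else 0)) := by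
      intro b
      split_ifs <;> ring
    rw [Finset.sum_congr rfl fun b _ => this b, ← Finset.mul_sum,
      Finset.sum_sub_distrib, Finset.sum_ite_eq' univ j (fun b => h a b),
      Finset.sum_ite_eq' univ j' (fun b => h a b)]
    simp
  rw [Finset.sum_congr rfl fun a _ => inner a]
  have : ∀ a : Fin N, ((if a = i then (1:ℝ) else 0) - (if a = i' then 1 else 0)) *
      (h a j - h a j')
      = (if a = i then h a j - h a j' else 0) - (if a = i' then h a j - h a j' else 0) := by
    intro a
    split_ifs <;> ring
  rw [Finset.sum_congr rfl fun a _ => this a, Finset.sum_sub_distrib,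
    Finset.sum_ite_eq' univ i (fun a => h a j - h a j'),
    Finset.sum_ite_eq' univ i' (fun a => h a j - h a j')]
  simp
  ring

lemma foc {N K : ℕ} (M : Matrix (Fin N) (Fin K) ℝ) {τ : ℝ} (hτ : 0 < τ)
    (q : Fin K → ℝ)
    (P : Matrix (Fin N) (Fin K) ℝ)
    (hpos : ∀ a b, 0 < P a b) (hPr : ∀ a, ∑ b, P a b = 1 / N)
    (hPc : ∀ b, ∑ a, P a b = q b)
    (hmax : ∀ R : Matrix (Fin N) (Fin K) ℝ, (∀ a b, 0 ≤ R a b) →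
      (∀ a, ∑ b, R a b = 1 / N) → (∀ b, ∑ a, R a b = q b) →
      Fobj M τ R ≤ Fobj M τ P)
    (i i' : Fin N) (j j' : Fin K) :
    (Real.log (P i j) - M i j / τ) + (Real.log (P i' j') - M i' j' / τ)
      = (Real.log (P i j') - M i j' / τ) + (Real.log (P i' j) - M i' j / τ) := by
  classical
  set d1 : Fin N → ℝ := fun a => (if a = i then (1:ℝ) else 0) - (if a = i' then 1 else 0)
    with hd1
  set d2 : Fin K → ℝ := fun b => (if b = j then (1:ℝ) else 0) - (if b = j' then 1 else 0)
    with hd2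
  have hd1abs : ∀ a, |d1 a| ≤ 1 := by
    intro a
    simp only [hd1]
    split_ifs <;> norm_num
  have hd2abs : ∀ b, |d2 b| ≤ 1 := by
    intro b
    simp only [hd2]
    split_ifs <;> norm_num
  have hd1sum : ∑ a, d1 a = 0 := by
    simp only [hd1]
    rw [Finset.sum_sub_distrib, Finset.sum_ite_eq' univ i (fun _ => (1:ℝ)),
      Finset.sum_ite_eq' univ i' (fun _ => (1:ℝ))]
    simp
  have hd2sum : ∑ b, d2 b = 0 := by
    simp only [hd2]
    rw [Finset.sum_sub_distrib, Finset.sum_ite_eq' univ j (fun _ => (1:ℝ)),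
      Finset.sum_ite_eq' univ j' (fun _ => (1:ℝ))]
    simp
  -- minimum entry
  obtain ⟨p0, -, hminle⟩ := Finset.exists_min_image (Finset.univ : Finset (Fin N × Fin K))
    (fun p => P p.1 p.2) ⟨(i, j), mem_univ _⟩
  set ε : ℝ := P p0.1 p0.2 with hε
  have hε0 : 0 < ε := hpos p0.1 p0.2
  have hεle : ∀ a b, ε ≤ P a b := fun a b => hminle (a, b) (mem_univ _)
  -- the path
  set g : ℝ → ℝ := fun t => (∑ a, ∑ b, M a b * (P a b + t * (d1 a * d2 b))) +
      τ * ∑ a, ∑ b, Real.negMulLog (P a b + t * (d1 a * d2 b)) with hg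
  have hg0 : g 0 = Fobj M τ P := by
    simp [hg, Fobj]
  have hgle : ∀ t : ℝ, |t| ≤ ε → g t ≤ g 0 := by
    intro t ht
    rw [hg0]
    set R : Matrix (Fin N) (Fin K) ℝ := fun a b => P a b + t * (d1 a * d2 b) with hR
    have hR0 : ∀ a b, 0 ≤ R a b := by
      intro a b
      have habs : |t * (d1 a * d2 b)| ≤ ε := by
        rw [abs_mul, abs_mul]
        calc |t| * (|d1 a| * |d2 b|) ≤ ε * (1 * 1) := by
              apply mul_le_mul ht _ (by positivity) hε0.le
              exact mul_le_mul (hd1abs a) (hd2abs b) (abs_nonneg _) zero_le_one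
          _ = ε := by ring
      have := neg_abs_le (t * (d1 a * d2 b))
      have := hεle a b
      simp only [hR]
      linarith
    have hRr : ∀ a, ∑ b, R a b = 1 / N := by
      intro a
      simp only [hR]
      rw [Finset.sum_add_distrib, hPr a]
      have : ∑ b, t * (d1 a * d2 b) = t * d1 a * ∑ b, d2 b := by
        rw [Finset.mul_sum]
        apply Finset.sum_congr rfl
        intro b _
        ring
      rw [this, hd2sum]
      ring
    have hRc : ∀ b, ∑ a, R a b = q b := by
      intro b
      simp only [hR]
      rw [Finset.sum_add_distrib, hPc b]
      have : ∑ a, t * (d1 a * d2 b) = t * d2 b * ∑ a, d1 a := by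
        rw [Finset.mul_sum]
        apply Finset.sum_congr rfl
        intro a _
        ring
      rw [this, hd1sum]
      ring
    have := hmax R hR0 hRr hRc
    have hgR : g t = Fobj M τ R := by
      simp only [hg, hR, Fobj]
    rw [hgR]
    exact this
  have hloc : IsLocalMax g 0 := by
    filter_upwards [Metric.ball_mem_nhds (0:ℝ) hε0] with t ht
    rw [Metric.mem_ball, Real.dist_eq, sub_zero] at ht
    exact hgle t ht.le
  -- derivative
  set s0 : ℝ := (∑ a, ∑ b, M a b * (d1 a * d2 b)) +
      τ * ∑ a, ∑ b, (-Real.log (P a b) - 1) * (d1 a * d2 b) with hs0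
  have hderiv : HasDerivAt g s0 0 := by
    apply HasDerivAt.add
    · apply HasDerivAt.fun_sum
      intro a _
      apply HasDerivAt.fun_sum
      intro b _
      have h1 : HasDerivAt (fun t : ℝ => P a b + t * (d1 a * d2 b)) (d1 a * d2 b) 0 := by
        simpa using ((hasDerivAt_id (0:ℝ)).mul_const (d1 a * d2 b)).const_add (P a b)
      simpa using h1.const_mul (M a b)
    · apply HasDerivAt.const_mul
      apply HasDerivAt.fun_sum
      intro a _
      apply HasDerivAt.fun_sum
      intro b _
      have h1 : HasDerivAt (fun t : ℝ => P a b + t * (d1 a * d2 b)) (d1 a * d2 b) 0 := by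
        simpa using ((hasDerivAt_id (0:ℝ)).mul_const (d1 a * d2 b)).const_add (P a b)
      have h2 : HasDerivAt Real.negMulLog (-Real.log (P a b) - 1) (P a b + 0 * (d1 a * d2 b)) := by
        have : P a b + 0 * (d1 a * d2 b) = P a b := by ring
        rw [this]
        exact Real.hasDerivAt_negMulLog (hpos a b).ne'
      exact h2.comp 0 h1
  have hs0eq : s0 = 0 := hloc.hasDerivAt_eq_zero hderiv
  -- simplify s0
  rw [hs0] at hs0eq
  rw [sum_mul_d1d2 i i' j j' (fun a b => M a b)] at hs0eq
  rw [sum_mul_d1d2 i i' j j' (fun a b => -Real.log (P a b) - 1)] at hs0eq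
  have hτ' : τ ≠ 0 := hτ.ne'
  field_simp
  nlinarith [hs0eq, sq_nonneg τ]


/-- Entropy-regularized OT has a unique maximizer and it is a diagonal scaling
    of `A = exp(M/τ)`. -/
theorem entropic_ot_unique_maximizer_diag_form
    (N K : ℕ) (hN : 0 < N) (hK : 0 < K)
    (M : Matrix (Fin N) (Fin K) ℝ) (τ : ℝ) (hτ : 0 < τ)
    (q : Fin K → ℝ) (hq : ∀ j, 0 < q j) (hq1 : ∑ j, q j = 1)
    (Feas : Matrix (Fin N) (Fin K) ℝ → Prop)
    (hFeas : ∀ P, Feas P ↔ (∀ i j, 0 ≤ P i j) ∧ (∀ i, ∑ j, P i j = 1 / N) ∧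
      (∀ j, ∑ i, P i j = q j))
    (f : Matrix (Fin N) (Fin K) ℝ → ℝ)
    (hf : ∀ P, f P = (∑ i, ∑ j, M i j * P i j) +
      τ * ∑ i, ∑ j, Real.negMulLog (P i j)) :
    (∃! P, Feas P ∧ ∀ P', Feas P' → f P' ≤ f P) ∧
    (∀ P, (Feas P ∧ ∀ P', Feas P' → f P' ≤ f P) →
      ∃ u : Fin N → ℝ, ∃ v : Fin K → ℝ, (∀ i, 0 < u i) ∧ (∀ j, 0 < v j) ∧
        ∀ i j, P i j = u i * Real.exp (M i j / τ) * v j) := by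
  have hfF : ∀ R, f R = Fobj M τ R := fun R => by rw [hf]; rfl
  -- translate maximality to Fobj form
  have hmaxF : ∀ P : Matrix (Fin N) (Fin K) ℝ,
      (Feas P ∧ ∀ P', Feas P' → f P' ≤ f P) →
      ((∀ i j, 0 ≤ P i j) ∧ (∀ i, ∑ j, P i j = 1 / N) ∧ (∀ j, ∑ i, P i j = q j)) ∧
      ∀ R : Matrix (Fin N) (Fin K) ℝ, (∀ a b, 0 ≤ R a b) →
        (∀ a, ∑ b, R a b = 1 / N) → (∀ b, ∑ a, R a b = q b) →
        Fobj M τ R ≤ Fobj M τ P := by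
    intro P ⟨h1, h2⟩
    refine ⟨(hFeas P).1 h1, fun R hR1 hR2 hR3 => ?_⟩
    have := h2 R ((hFeas R).2 ⟨hR1, hR2, hR3⟩)
    rwa [hfF, hfF] at this
  obtain ⟨P₀, hP₀feas, hP₀max⟩ := exists_maximizer M τ q hN hq hq1
  have hP₀Feas : Feas P₀ := (hFeas P₀).2 hP₀feas
  have hP₀max' : ∀ P', Feas P' → f P' ≤ f P₀ := by
    intro P' hP'
    rw [hfF, hfF]
    exact hP₀max P' ((hFeas P').1 hP')
  constructor
  · refine ⟨P₀, ⟨hP₀Feas, hP₀max'⟩, ?_⟩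
    intro Q hQ
    obtain ⟨⟨hQ0, hQr, hQc⟩, hQmax⟩ := hmaxF Q hQ
    have hval : Fobj M τ P₀ = Fobj M τ Q := by
      apply le_antisymm
      · exact hQmax P₀ hP₀feas.1 hP₀feas.2.1 hP₀feas.2.2
      · exact hP₀max Q ⟨hQ0, hQr, hQc⟩
    exact (maximizer_unique' M hτ q P₀ Q hP₀feas.1 hP₀feas.2.1 hP₀feas.2.2
      hQ0 hQr hQc (fun R a b c => hP₀max R ⟨a, b, c⟩) hval).symm
  · intro P hP
    obtain ⟨⟨hP0, hPr, hPc⟩, hPmaxF⟩ := hmaxF P hP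
    have hpos : ∀ a b, 0 < P a b :=
      maximizer_pos hN hK M hτ q hq hq1 P hP0 hPr hPc hPmaxF
    set i₀ : Fin N := ⟨0, hN⟩
    set j₀ : Fin K := ⟨0, hK⟩
    set l : Fin N → Fin K → ℝ := fun a b => Real.log (P a b) - M a b / τ with hl
    have hFOC : ∀ a b, l a b + l i₀ j₀ = l a j₀ + l i₀ b := by
      intro a b
      have := foc M hτ q P hpos hPr hPc hPmaxF a i₀ b j₀
      simp only [hl]
      linarith [this]
    refine ⟨fun a => Real.exp (l a j₀ - l i₀ j₀), fun b => Real.exp (l i₀ b),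
      fun a => Real.exp_pos _, fun b => Real.exp_pos _, ?_⟩
    intro a b
    rw [← Real.exp_add, ← Real.exp_add]
    have harg : l a j₀ - l i₀ j₀ + M a b / τ + l i₀ b = Real.log (P a b) := by
      have h := hFOC a b
      simp only [hl] at h ⊢
      linarith
    rw [harg, Real.exp_log (hpos a b)]
end

section
/- KKT characterization of the entropic OT maximizer: a strictly positive matrix P in the transport polytope maximizes ⟨M,P⟩ + τH(P) over the polytope if and only if there exist vectors α ∈ R^N and β ∈ R^K such that log P_{i,j} = M_{i,j}/τ + α_i + β_j for all i, j. -/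
/-- Pointwise Gibbs inequality: `x log p - x log x ≤ p - x`. -/
private lemma entropic_ot_gibbs_pt {x p : ℝ} (hx : 0 ≤ x) (hp : 0 < p) :
    x * Real.log p + Real.negMulLog x ≤ p - x := by
  rcases eq_or_lt_of_le hx with h | h
  · simp [← h]; positivity
  · rw [Real.negMulLog, neg_mul]
    have h1 : Real.log (p / x) ≤ p / x - 1 := Real.log_le_sub_one_of_pos (by positivity)
    have h2 : Real.log (p / x) = Real.log p - Real.log x := Real.log_div hp.ne' h.ne'
    have h3 : x * Real.log (p / x) ≤ x * (p / x - 1) := mul_le_mul_of_nonneg_left h1 hx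
    have h4 : x * (p / x - 1) = p - x := by field_simp
    nlinarith [h3]

/-- Double sum against a rank-one difference tensor. -/
private lemma entropic_ot_quad_sum {n m : ℕ} (i i0 : Fin n) (j j0 : Fin m)
    (c : Fin n → Fin m → ℝ) :
    ∑ k, ∑ l, c k l * (((if k = i then (1:ℝ) else 0) - if k = i0 then 1 else 0) *
      ((if l = j then (1:ℝ) else 0) - if l = j0 then 1 else 0)) =
    c i j - c i j0 - c i0 j + c i0 j0 := by
  have h : ∀ k l, c k l * (((if k = i then (1:ℝ) else 0) - if k = i0 then 1 else 0) *
      ((if l = j then (1:ℝ) else 0) - if l = j0 then 1 else 0)) =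
      (if k = i then if l = j then c k l else 0 else 0)
      - (if k = i then if l = j0 then c k l else 0 else 0)
      - (if k = i0 then if l = j then c k l else 0 else 0)
      + (if k = i0 then if l = j0 then c k l else 0 else 0) := by
    intro k l
    split_ifs <;> simp_all
  simp only [h, Finset.sum_add_distrib, Finset.sum_sub_distrib]
  simp [Finset.sum_ite_eq', Finset.sum_ite_eq]

/-- KKT characterization: a strictly positive feasible `P` maximizes the
    entropic OT objective iff `log P i j = M i j / τ + α i + β j`. -/
theorem entropic_ot_kkt_characterization
    (N K : ℕ) (hN : 0 < N) (hK : 0 < K)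
    (M : Matrix (Fin N) (Fin K) ℝ) (τ : ℝ) (hτ : 0 < τ)
    (q : Fin K → ℝ) (hq : ∀ j, 0 < q j) (hq1 : ∑ j, q j = 1)
    (Feas : Matrix (Fin N) (Fin K) ℝ → Prop)
    (hFeas : ∀ P, Feas P ↔ (∀ i j, 0 ≤ P i j) ∧ (∀ i, ∑ j, P i j = 1 / N) ∧
      (∀ j, ∑ i, P i j = q j))
    (f : Matrix (Fin N) (Fin K) ℝ → ℝ)
    (hf : ∀ P, f P = (∑ i, ∑ j, M i j * P i j) +
      τ * ∑ i, ∑ j, Real.negMulLog (P i j))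
    (P : Matrix (Fin N) (Fin K) ℝ) (hPpos : ∀ i j, 0 < P i j) (hP : Feas P) :
    (∀ P', Feas P' → f P' ≤ f P) ↔
    ∃ α : Fin N → ℝ, ∃ β : Fin K → ℝ,
      ∀ i j, Real.log (P i j) = M i j / τ + α i + β j := by
  constructor
  · -- forward: maximizer → multipliers
    intro hmax
    set i0 : Fin N := ⟨0, hN⟩
    set j0 : Fin K := ⟨0, hK⟩
    obtain ⟨hP0, hPr, hPc⟩ := (hFeas P).mp hP
    have claim : ∀ i j,
        Real.log (P i j) - M i j / τ + (Real.log (P i0 j0) - M i0 j0 / τ) =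
        (Real.log (P i j0) - M i j0 / τ) + (Real.log (P i0 j) - M i0 j / τ) := by
      intro i j
      by_cases hi : i = i0
      · subst hi; ring
      by_cases hj : j = j0
      · subst hj; ring
      set a : Fin N → ℝ := fun k => (if k = i then 1 else 0) - (if k = i0 then 1 else 0)
        with ha
      set b : Fin K → ℝ := fun l => (if l = j then 1 else 0) - (if l = j0 then 1 else 0)
        with hb
      have ha_sum : ∑ k, a k = 0 := by
        simp [ha, Finset.sum_sub_distrib]
      have hb_sum : ∑ l, b l = 0 := by
        simp [hb, Finset.sum_sub_distrib]
      have ha_abs : ∀ k, |a k| ≤ 1 := by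
        intro k; simp only [ha]; split_ifs <;> norm_num
      have hb_abs : ∀ l, |b l| ≤ 1 := by
        intro l; simp only [hb]; split_ifs <;> norm_num
      set Q : ℝ → Matrix (Fin N) (Fin K) ℝ := fun t k l => P k l + t * (a k * b l) with hQ
      have hne : (Finset.univ : Finset (Fin N × Fin K)).Nonempty :=
        ⟨(i0, j0), Finset.mem_univ _⟩
      set ε : ℝ := Finset.univ.inf' hne (fun p : Fin N × Fin K => P p.1 p.2) with hε
      have hεpos : 0 < ε := by
        rw [hε, Finset.lt_inf'_iff]
        intro p _; exact hPpos p.1 p.2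
      have hεle : ∀ k l, ε ≤ P k l := fun k l => Finset.inf'_le _ (Finset.mem_univ (k, l))
      have hfeas : ∀ t : ℝ, |t| ≤ ε → Feas (Q t) := by
        intro t ht
        rw [hFeas]
        refine ⟨?_, ?_, ?_⟩
        · intro k l
          have h1 : |t * (a k * b l)| ≤ ε := by
            rw [abs_mul, abs_mul]
            calc |t| * (|a k| * |b l|) ≤ |t| * (1 * 1) := by
                  apply mul_le_mul_of_nonneg_left _ (abs_nonneg t)
                  exact mul_le_mul (ha_abs k) (hb_abs l) (abs_nonneg _) zero_le_one
              _ = |t| := by ring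
              _ ≤ ε := ht
          have h2 := neg_abs_le (t * (a k * b l))
          have h3 := hεle k l
          simp only [hQ]
          linarith
        · intro k
          have : ∀ l, t * (a k * b l) = (t * a k) * b l := fun l => by ring
          simp only [hQ, Finset.sum_add_distrib, hPr k, this, ← Finset.mul_sum, hb_sum,
            mul_zero, add_zero]
        · intro l
          have : ∀ k, t * (a k * b l) = (t * b l) * a k := fun k => by ring
          simp only [hQ, Finset.sum_add_distrib, hPc l, this, ← Finset.mul_sum, ha_sum,
            mul_zero, add_zero]
      set φ : ℝ → ℝ := fun t => f (Q t) with hφ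
      have hQ0 : Q 0 = P := by funext k l; simp [hQ]
      have hlocmax : IsLocalMax φ 0 := by
        have hnb : Set.Icc (-ε) ε ∈ nhds (0:ℝ) := Icc_mem_nhds (by linarith) hεpos
        filter_upwards [hnb] with t ht
        have : Feas (Q t) := hfeas t (abs_le.mpr ⟨ht.1, ht.2⟩)
        simp only [hφ, hQ0]
        exact hmax _ this
      set d : ℝ := (∑ k, ∑ l, M k l * (a k * b l)) +
          τ * ∑ k, ∑ l, (-Real.log (P k l) - 1) * (a k * b l) with hd
      have hlin : ∀ k l, HasDerivAt (fun t => P k l + t * (a k * b l)) (a k * b l) 0 := by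
        intro k l
        simpa using ((hasDerivAt_id (0:ℝ)).mul_const (a k * b l)).const_add (P k l)
      have hder : HasDerivAt φ d 0 := by
        have h1 : HasDerivAt (fun t => ∑ k, ∑ l, M k l * Q t k l)
            (∑ k, ∑ l, M k l * (a k * b l)) 0 := by
          apply HasDerivAt.fun_sum
          intro k _
          apply HasDerivAt.fun_sum
          intro l _
          exact (hlin k l).const_mul (M k l)
        have h2 : HasDerivAt (fun t => ∑ k, ∑ l, Real.negMulLog (Q t k l))
            (∑ k, ∑ l, (-Real.log (P k l) - 1) * (a k * b l)) 0 := by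
          apply HasDerivAt.fun_sum
          intro k _
          apply HasDerivAt.fun_sum
          intro l _
          have hg := Real.hasDerivAt_negMulLog (x := P k l + 0 * (a k * b l)) (by
            simpa using (hPpos k l).ne')
          have := hg.comp 0 (hlin k l)
          rw [zero_mul, add_zero] at this
          exact this
        have := h1.add (h2.const_mul τ)
        have heq : φ = fun t => (∑ k, ∑ l, M k l * Q t k l) +
            τ * ∑ k, ∑ l, Real.negMulLog (Q t k l) := by
          funext t; simp only [hφ]; rw [hf]
        rw [heq, hd]
        exact this
      have hd0 : d = 0 := by
        have := hlocmax.deriv_eq_zero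
        rw [hder.deriv] at this
        exact this
      have e1 : ∑ k, ∑ l, M k l * (a k * b l) =
          M i j - M i j0 - M i0 j + M i0 j0 := entropic_ot_quad_sum i i0 j j0 M
      have e2 : ∑ k, ∑ l, (-Real.log (P k l) - 1) * (a k * b l) =
          (-Real.log (P i j) - 1) - (-Real.log (P i j0) - 1)
          - (-Real.log (P i0 j) - 1) + (-Real.log (P i0 j0) - 1) :=
        entropic_ot_quad_sum i i0 j j0 (fun k l => -Real.log (P k l) - 1)
      rw [hd, e1, e2] at hd0
      have hτ' : τ ≠ 0 := hτ.ne'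
      field_simp
      nlinarith [hd0]
    refine ⟨fun i => (Real.log (P i j0) - M i j0 / τ) - (Real.log (P i0 j0) - M i0 j0 / τ),
      fun j => Real.log (P i0 j) - M i0 j / τ, ?_⟩
    intro i j
    have := claim i j
    linarith
  · -- backward: multipliers → maximizer
    rintro ⟨α, β, hlog⟩
    have hM : ∀ i j, M i j = τ * (Real.log (P i j) - α i - β j) := by
      intro i j
      have := hlog i j
      field_simp at this ⊢
      linarith
    have key : ∀ Q, Feas Q → f Q =
        τ * (∑ i, ∑ j, (Q i j * Real.log (P i j) + Real.negMulLog (Q i j)))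
        - τ * (∑ i, α i * (1 / N)) - τ * (∑ j, β j * q j) := by
      intro Q hQ
      rw [hFeas] at hQ
      obtain ⟨hQ0, hQr, hQc⟩ := hQ
      rw [hf]
      have e1 : ∑ i, ∑ j, M i j * Q i j =
          τ * (∑ i, ∑ j, Q i j * Real.log (P i j))
          - τ * (∑ i, α i * (1 / N)) - τ * (∑ j, β j * q j) := by
        have : ∀ i j, M i j * Q i j =
            τ * (Q i j * Real.log (P i j)) - τ * (α i * Q i j) - τ * (β j * Q i j) := by
          intro i j; rw [hM i j]; ring
        simp only [this, Finset.sum_sub_distrib, ← Finset.mul_sum]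
        congr 2
        · congr 1
          apply Finset.sum_congr rfl
          intro i _
          rw [hQr i]
        · rw [Finset.sum_comm]
          congr 1
          funext j
          rw [← Finset.mul_sum, hQc j]
      rw [e1]
      have hsplit : ∑ x : Fin N, ∑ y : Fin K,
          (Q x y * Real.log (P x y) + Real.negMulLog (Q x y)) =
          (∑ x : Fin N, ∑ y : Fin K, Q x y * Real.log (P x y)) +
          ∑ x : Fin N, ∑ y : Fin K, Real.negMulLog (Q x y) := by
        simp [Finset.sum_add_distrib]
      rw [hsplit]
      ring
    intro P' hP'
    rw [key P hP, key P' hP']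
    obtain ⟨hP'0, hP'r, hP'c⟩ := (hFeas P').mp hP'
    obtain ⟨hP0, hPr, hPc⟩ := (hFeas P).mp hP
    have hS : (∑ i, ∑ j, (P i j * Real.log (P i j) + Real.negMulLog (P i j))) = 0 := by
      apply Finset.sum_eq_zero; intro i _
      apply Finset.sum_eq_zero; intro j _
      simp [Real.negMulLog]
    have hS' : (∑ i, ∑ j, (P' i j * Real.log (P i j) + Real.negMulLog (P' i j))) ≤ 0 := by
      have hb : ∀ i ∈ Finset.univ, ∑ j, (P' i j * Real.log (P i j) + Real.negMulLog (P' i j))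
          ≤ ∑ j : Fin K, (P i j - P' i j) := by
        intro i _
        apply Finset.sum_le_sum
        intro j _
        exact entropic_ot_gibbs_pt (hP'0 i j) (hPpos i j)
      calc _ ≤ ∑ i, ∑ j, (P i j - P' i j) := Finset.sum_le_sum hb
        _ = 0 := by
          apply Finset.sum_eq_zero; intro i _
          rw [Finset.sum_sub_distrib, hPr i, hP'r i, sub_self]
    rw [hS]
    have := mul_le_mul_of_nonneg_left hS' hτ.le
    linarith
end
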